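/- arXiv:2512.13849 — 3 statements merged into one kernel-verified Lean document; each statement's English description precedes it below -/
import Mathlib

section
/- Let A be a finite nonempty set of reals, P = {x ∈ A−A : δ_A(x) ≥ |A|²/(11|A−A|)}, and R = {x ∈ A : |(x−A) ∩ P| ≥ (2/√11)|A|}. Then |R| ≥ ((10/11 − 2/√11)/(1 − 2/√11))·|A|; in particular |R| > |A|/2. -/
/-!
Write δ for the representation function of `A - A`. Its values on `A - A` add up to `|A|²`, and
the differences with `δ(x) < |A|²/(11|A - A|)` contribute less than `|A|²/11`, so the popular
differences `P` carry at least `(10/11)|A|²` of the mass. Counting pairs `(x, p) ∈ A × P` with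
`x - p ∈ A` in two ways, this mass equals `∑_{x ∈ A} |(x - A) ∩ P|`. Each summand is at most `|A|`,
and below `c|A|` (with `c = 2/√11`) outside `R`, which forces
`|R| ≥ (10/11 - c)/(1 - c) · |A|`; as `c < 9/11` this exceeds `|A|/2`.
-/

open Finset Pointwise

theorem Finset.sum_le_sum_filter_add_card_filter_not_nsmul {ι M : Type*} [AddCommMonoid M]
    [PartialOrder M] [IsOrderedAddMonoid M] (s : Finset ι) (p : ι → Prop) [DecidablePred p]
    (f : ι → M) {t : M} (h : ∀ x ∈ s, ¬p x → f x ≤ t) :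
    ∑ x ∈ s, f x ≤ ∑ x ∈ s with p x, f x + #{x ∈ s | ¬p x} • t := by
  rw [← sum_filter_add_sum_filter_not s p f]
  gcongr
  exact sum_le_card_nsmul _ _ _ fun x hx => h x (mem_filter.1 hx).1 (mem_filter.1 hx).2

theorem div_mul_card_le_card_filter_of_mul_card_le_sum {ι : Type*} (s : Finset ι) (g : ι → ℝ)
    {M κ c : ℝ} (hM : 0 < M) (hc : c < 1) (hg : ∀ x ∈ s, g x ≤ M)
    (hsum : κ * M * #s ≤ ∑ x ∈ s, g x) :
    (κ - c) / (1 - c) * #s ≤ #{x ∈ s | g x ≥ c * M} := by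
  have hsplit := s.sum_le_sum_filter_add_card_filter_not_nsmul (fun x => g x ≥ c * M) g
    (t := c * M) fun x _ hx => (not_le.1 hx).le
  have hrich : ∑ x ∈ s with g x ≥ c * M, g x ≤ #{x ∈ s | g x ≥ c * M} • M :=
    sum_le_card_nsmul _ _ _ fun x hx => hg x (mem_filter.1 hx).1
  have hcard : (#{x ∈ s | ¬g x ≥ c * M} : ℝ) = #s - #{x ∈ s | g x ≥ c * M} := by
    rw [eq_sub_iff_add_eq, add_comm]
    exact_mod_cast card_filter_add_card_filter_not _
  rw [nsmul_eq_mul, hcard] at hsplit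
  rw [nsmul_eq_mul] at hrich
  have key : κ * #s * M ≤ (#{x ∈ s | g x ≥ c * M} + (#s - #{x ∈ s | g x ≥ c * M}) * c) * M := by
    linarith
  rw [div_mul_eq_mul_div, div_le_iff₀ (by linarith)]
  linarith [le_of_mul_le_mul_right key hM]

section DiffRepr

variable {α : Type*} [AddCommGroup α] [DecidableEq α]

/-- `diffRepr A x` is `δ_A(x)`. -/
def diffRepr (A : Finset α) (x : α) : ℕ := #{p ∈ A ×ˢ A | x = p.1 - p.2}

theorem sum_diffRepr_sub (A : Finset α) : ∑ x ∈ A - A, diffRepr A x = #A ^ 2 := by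
  rw [sq, ← card_product, card_eq_sum_card_fiberwise (f := fun p : α × α => p.1 - p.2) (t := A - A)]
  · simp only [diffRepr, eq_comm]
  · intro p hp
    rw [mem_coe, mem_product] at hp
    exact sub_mem_sub hp.1 hp.2

theorem diffRepr_eq_card_filter (A : Finset α) (x : α) :
    diffRepr A x = #{a ∈ A | a - x ∈ A} := by
  refine card_nbij (·.1) ?_ ?_ ?_
  · intro p hp
    obtain ⟨⟨ha, hb⟩, rfl⟩ : (p.1 ∈ A ∧ p.2 ∈ A) ∧ x = p.1 - p.2 := by simpa using hp
    exact mem_filter.2 ⟨ha, by simpa using hb⟩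
  · rintro ⟨a, b⟩ hab ⟨a', b'⟩ hab' (rfl : a = a')
    have hx : a - b = a - b' := (mem_filter.1 hab).2.symm.trans (mem_filter.1 hab').2
    rw [sub_right_inj.1 hx]
  · intro a ha
    obtain ⟨ha, hax⟩ := mem_filter.1 ha
    exact ⟨(a, a - x), mem_filter.2 ⟨mem_product.2 ⟨ha, hax⟩, (sub_sub_cancel a x).symm⟩, rfl⟩

theorem sum_card_image_sub_inter (A P : Finset α) :
    ∑ x ∈ A, #(A.image (x - ·) ∩ P) = ∑ p ∈ P, diffRepr A p := by
  have hinter : ∀ x, A.image (x - ·) ∩ P = P.bipartiteAbove (fun x p => x - p ∈ A) x := by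
    intro x
    ext p
    simp only [mem_inter, mem_image, mem_bipartiteAbove]
    constructor
    · rintro ⟨⟨a, ha, rfl⟩, hp⟩
      exact ⟨hp, by rwa [sub_sub_cancel]⟩
    · rintro ⟨hp, h⟩
      exact ⟨⟨x - p, h, sub_sub_cancel x p⟩, hp⟩
  simp_rw [hinter, sum_card_bipartiteAbove_eq_sum_card_bipartiteBelow, diffRepr_eq_card_filter]
  rfl

theorem sum_diffRepr_popular (A : Finset α) (hA : A.Nonempty) {K : ℝ} (hK : 0 < K) :
    (1 - 1 / K) * #A ^ 2 ≤ ∑ p ∈ (A - A).filter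
      (fun x => (diffRepr A x : ℝ) ≥ #A ^ 2 / (K * #(A - A))), (diffRepr A p : ℝ) := by
  have hD : (0 : ℝ) < #(A - A) := by exact_mod_cast (hA.sub hA).card_pos
  have hsplit := (A - A).sum_le_sum_filter_add_card_filter_not_nsmul
    (fun x => (diffRepr A x : ℝ) ≥ #A ^ 2 / (K * #(A - A))) (fun x => (diffRepr A x : ℝ))
    fun x _ hx => (not_le.1 hx).le
  have htotal : ∑ x ∈ A - A, (diffRepr A x : ℝ) = #A ^ 2 := by exact_mod_cast sum_diffRepr_sub A
  have hsparse : (#{x ∈ A - A | ¬(diffRepr A x : ℝ) ≥ #A ^ 2 / (K * #(A - A))} : ℝ) *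
      (#A ^ 2 / (K * #(A - A))) ≤ #A ^ 2 / K := by
    calc _ ≤ (#(A - A) : ℝ) * (#A ^ 2 / (K * #(A - A))) := by
          gcongr
          exact filter_subset _ _
      _ = #A ^ 2 / K := by field_simp
  rw [nsmul_eq_mul] at hsplit
  linarith [show (1 - 1 / K) * #A ^ 2 = (#A : ℝ) ^ 2 - #A ^ 2 / K by ring]

end DiffRepr

theorem stmt2 (A : Finset ℝ) (hA : A.Nonempty)
    (P R : Finset ℝ)
    (hP : P = (A - A).filter
      (fun x => (((A ×ˢ A).filter (fun p => x = p.1 - p.2)).card : ℝ) ≥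
        (A.card : ℝ) ^ 2 / (11 * ((A - A).card : ℝ))))
    (hR : R = A.filter
      (fun x => (((A.image (fun a => x - a)) ∩ P).card : ℝ) ≥
        (2 / Real.sqrt 11) * (A.card : ℝ))) :
    (R.card : ℝ) ≥ ((10 / 11 - 2 / Real.sqrt 11) / (1 - 2 / Real.sqrt 11)) * (A.card : ℝ) ∧
      (R.card : ℝ) > (A.card : ℝ) / 2 := by
  have hn : (0 : ℝ) < #A := by exact_mod_cast hA.card_pos
  have hc : 2 / Real.sqrt 11 < 2 / 3 :=
    div_lt_div_of_pos_left two_pos three_pos (Real.lt_sqrt three_pos.le |>.2 (by norm_num))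
  have hpop : 10 / 11 * #A * #A ≤ ∑ x ∈ A, (#(A.image (x - ·) ∩ P) : ℝ) :=
    calc 10 / 11 * #A * #A = (1 - 1 / 11) * (#A : ℝ) ^ 2 := by ring
      _ ≤ ∑ p ∈ P, (diffRepr A p : ℝ) := by rw [hP]; exact sum_diffRepr_popular A hA (by norm_num)
      _ = ∑ x ∈ A, (#(A.image (x - ·) ∩ P) : ℝ) := by
        exact_mod_cast (sum_card_image_sub_inter A P).symm
  have hrich : (10 / 11 - 2 / Real.sqrt 11) / (1 - 2 / Real.sqrt 11) * #A ≤ #R := by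
    rw [hR]
    refine div_mul_card_le_card_filter_of_mul_card_le_sum A _ hn (by linarith) (fun x _ => ?_) hpop
    exact_mod_cast (card_le_card inter_subset_left).trans card_image_le
  refine ⟨hrich, ?_⟩
  have : 1 / 2 < (10 / 11 - 2 / Real.sqrt 11) / (1 - 2 / Real.sqrt 11) := by
    rw [lt_div_iff₀ (by linarith)]
    linarith
  nlinarith
end

section
/- Let A be a finite set of reals, P = {x ∈ A−A : δ_A(x) ≥ |A|²/(11|A−A|)}, and let r ∈ A satisfy |(r−A) ∩ P| ≥ (2/√11)|A|. Then #{(a₁,a₂) ∈ A² : a₁−a₂ ∈ P, r−a₁ ∈ P, and r−a₂ ∈ P} ≥ (3/11)|A|². -/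
/-!
Call a difference `x` popular if it has at least `|A|² / (11 |A - A|)` representations.
The unpopular differences, at most `|A - A|` of them, account for at most `|A|² / 11` pairs, so
at least `(10/11)|A|²` pairs have a popular difference. The pairs `(a₁, a₂)` with `r - a₁` and
`r - a₂` both popular form a square `B × B` with `|B| ≥ (2/√11)|A|`, hence number at least
`(4/11)|A|²`. Both families live in `A × A`, so they share at least `(10/11 + 4/11 - 1)|A|²` pairs.
-/

open Finset Pointwise

section

variable {α : Type*} [AddCommGroup α] [DecidableEq α]

theorem card_filter_sub_notMem_le (A P : Finset α) {t : ℝ} (ht : 0 ≤ t)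
    (hP : ∀ x ∈ A - A, x ∉ P → (#{p ∈ A ×ˢ A | x = p.1 - p.2} : ℝ) ≤ t) :
    (#{p ∈ A ×ˢ A | p.1 - p.2 ∉ P} : ℝ) ≤ #(A - A) * t := by
  have hmaps : ∀ p ∈ {p ∈ A ×ˢ A | p.1 - p.2 ∉ P}, p.1 - p.2 ∈ (A - A) \ P := by
    intro p hp
    simp only [mem_filter, mem_product] at hp
    exact mem_sdiff.2 ⟨sub_mem_sub hp.1.1 hp.1.2, hp.2⟩
  have hfiber : ∀ x ∈ (A - A) \ P,
      (#{p ∈ {p ∈ A ×ˢ A | p.1 - p.2 ∉ P} | p.1 - p.2 = x} : ℝ) ≤ t := by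
    intro x hx
    obtain ⟨hxA, hxP⟩ := mem_sdiff.1 hx
    refine le_trans ?_ (hP x hxA hxP)
    gcongr
    intro p
    simp only [mem_filter]
    exact fun h => ⟨h.1.1, h.2.symm⟩
  calc (#{p ∈ A ×ˢ A | p.1 - p.2 ∉ P} : ℝ)
      = ∑ x ∈ (A - A) \ P, (#{p ∈ {p ∈ A ×ˢ A | p.1 - p.2 ∉ P} | p.1 - p.2 = x} : ℝ) := by
        exact_mod_cast card_eq_sum_card_fiberwise hmaps
    _ ≤ #((A - A) \ P) * t := by simpa using sum_le_card_nsmul _ _ _ hfiber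
    _ ≤ #(A - A) * t := by gcongr; exact sdiff_subset

theorem le_card_filter_sub_mem_popular (A : Finset α) {K : ℝ} (hK : 0 < K) :
    (1 - 1 / K) * #A ^ 2 ≤ (#{p ∈ A ×ˢ A | p.1 - p.2 ∈
      {x ∈ A - A | (#{p ∈ A ×ˢ A | x = p.1 - p.2} : ℝ) ≥ #A ^ 2 / (K * #(A - A))}} : ℝ) := by
  obtain rfl | hA := A.eq_empty_or_nonempty
  · simp
  set P := {x ∈ A - A | (#{p ∈ A ×ˢ A | x = p.1 - p.2} : ℝ) ≥ #A ^ 2 / (K * #(A - A))}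
  have hd : (#(A - A) : ℝ) ≠ 0 := by exact_mod_cast (hA.sub hA).card_pos.ne'
  have hunpopular : (#{p ∈ A ×ˢ A | p.1 - p.2 ∉ P} : ℝ) ≤ #A ^ 2 / K := by
    convert card_filter_sub_notMem_le A P (t := #A ^ 2 / (K * #(A - A))) (by positivity)
      (fun x hx hxP => (not_le.1 fun h => hxP (mem_filter.2 ⟨hx, h⟩)).le) using 1
    field_simp
  have hsplit := card_filter_add_card_filter_not (s := A ×ˢ A) (fun p => p.1 - p.2 ∈ P)
  rw [card_product] at hsplit
  have : (#{p ∈ A ×ˢ A | p.1 - p.2 ∈ P} : ℝ) + #{p ∈ A ×ˢ A | p.1 - p.2 ∉ P} = #A ^ 2 := by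
    exact_mod_cast hsplit.trans (sq _).symm
  rw [sub_mul, one_div_mul_eq_div]
  linarith

end

theorem card_image_inter_eq_card_filter {α β : Type*} [DecidableEq β] {f : α → β}
    (hf : Function.Injective f) (s : Finset α) (t : Finset β) :
    #(s.image f ∩ t) = #{a ∈ s | f a ∈ t} := by
  rw [← filter_mem_eq_inter, filter_image, card_image_of_injective _ hf]

theorem card_add_card_le_card_add_card_inter {α : Type*} [DecidableEq α] {s t u : Finset α}
    (hs : s ⊆ u) (ht : t ⊆ u) : #s + #t ≤ #u + #(s ∩ t) := by
  rw [← card_union_add_card_inter]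
  gcongr
  exact union_subset hs ht

theorem stmt3_general (A : Finset ℝ)
    (P : Finset ℝ)
    (hP : P = (A - A).filter
      (fun x => (((A ×ˢ A).filter (fun p => x = p.1 - p.2)).card : ℝ) ≥
        (A.card : ℝ) ^ 2 / (11 * ((A - A).card : ℝ))))
    (r : ℝ)
    (hrich : (((A.image (fun a => r - a)) ∩ P).card : ℝ) ≥
      (2 / Real.sqrt 11) * (A.card : ℝ)) :
    ((((A ×ˢ A).filter
        (fun p => p.1 - p.2 ∈ P ∧ r - p.1 ∈ P ∧ r - p.2 ∈ P)).card : ℝ)) ≥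
      (3 / 11) * (A.card : ℝ) ^ 2 := by
  set S := (A ×ˢ A).filter (fun p => p.1 - p.2 ∈ P)
  set B := A.filter (fun a => r - a ∈ P)
  have hS : (10 / 11) * (#A : ℝ) ^ 2 ≤ #S := by
    have := le_card_filter_sub_mem_popular A (K := 11) (by norm_num)
    rw [← hP] at this
    linarith
  have hB : 2 / √11 * #A ≤ (#B : ℝ) := by
    rwa [card_image_inter_eq_card_filter (sub_right_injective (b := r))] at hrich
  have hBB : (4 / 11) * (#A : ℝ) ^ 2 ≤ #(B ×ˢ B) := by
    have h11 : (2 / √11 * #A) ^ 2 = (4 / 11) * (#A : ℝ) ^ 2 := by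
      rw [mul_pow, div_pow, Real.sq_sqrt (by norm_num)]
      norm_num
    rw [card_product, Nat.cast_mul, ← sq, ← h11]
    gcongr
  have hinter : (A ×ˢ A).filter (fun p => p.1 - p.2 ∈ P ∧ r - p.1 ∈ P ∧ r - p.2 ∈ P)
      = S ∩ B ×ˢ B := by
    ext p
    simp only [S, B, mem_filter, mem_inter, mem_product]
    tauto
  have hincl : #S + #(B ×ˢ B) ≤ #A ^ 2 + #(S ∩ B ×ˢ B) := by
    rw [sq, ← card_product]
    exact card_add_card_le_card_add_card_inter (filter_subset _ _)
      (product_subset_product (filter_subset _ _) (filter_subset _ _))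
  rw [hinter, ge_iff_le]
  have : (#S + #(B ×ˢ B) : ℝ) ≤ #A ^ 2 + #(S ∩ B ×ˢ B) := by exact_mod_cast hincl
  linarith

theorem stmt3 (A : Finset ℝ)
    (P : Finset ℝ)
    (hP : P = (A - A).filter
      (fun x => (((A ×ˢ A).filter (fun p => x = p.1 - p.2)).card : ℝ) ≥
        (A.card : ℝ) ^ 2 / (11 * ((A - A).card : ℝ))))
    (r : ℝ) (hr : r ∈ A)
    (hrich : (((A.image (fun a => r - a)) ∩ P).card : ℝ) ≥
      (2 / Real.sqrt 11) * (A.card : ℝ)) :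
    ((((A ×ˢ A).filter
        (fun p => p.1 - p.2 ∈ P ∧ r - p.1 ∈ P ∧ r - p.2 ∈ P)).card : ℝ)) ≥
      (3 / 11) * (A.card : ℝ) ^ 2 :=
  stmt3_general A P hP r hrich
end

section
/- Let X be a finite set of reals with |X| ≥ 2 and L ≥ 1 a real number. Define P = {y ∈ X+X : σ_X(y) ≥ |X|²/(8|X+X|·L)} and R = {x ∈ X : |(X+x) ∩ P| ≥ (3/4)|X|}. Then |R| ≥ (1 − 1/(2L))·|X|. -/
open Finset Pointwise

/-!
Count the pairs `(x', x) ∈ X²` with `x' + x ∉ P` in two ways. Grouped by their sum, each of the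
at most `|X + X|` sums outside `P` has fewer than `|X|² / (8 |X + X| L)` representations, so there
are at most `|X|² / (8L)` such pairs. Grouped by `x`, every `x ∉ R` contributes more than `|X| / 4`
of them. Hence `|X \ R| ≤ |X| / (2L)`.
-/

section
variable {α : Type*} [DecidableEq α] [Add α]

lemma card_filter_add_notMem_le (X P : Finset α) {c : ℝ} (hc : 0 ≤ c)
    (hσ : ∀ y ∈ X + X, y ∉ P → (#{p ∈ X ×ˢ X | p.1 + p.2 = y} : ℝ) ≤ c) :
    (#{p ∈ X ×ˢ X | p.1 + p.2 ∉ P} : ℝ) ≤ #(X + X) * c := by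
  set B := {p ∈ X ×ˢ X | p.1 + p.2 ∉ P}
  have hB : ∀ p ∈ B, p.1 + p.2 ∈ (X + X) \ P := by
    simp only [B, mem_filter, mem_product, mem_sdiff]
    exact fun p ⟨⟨h₁, h₂⟩, hP⟩ ↦ ⟨add_mem_add h₁ h₂, hP⟩
  calc (#B : ℝ) = ∑ y ∈ (X + X) \ P, (#{p ∈ B | p.1 + p.2 = y} : ℝ) := by
        exact_mod_cast card_eq_sum_card_fiberwise hB
    _ ≤ ∑ _y ∈ (X + X) \ P, c := by
        refine sum_le_sum fun y hy ↦ le_trans ?_ (hσ y (mem_sdiff.1 hy).1 (mem_sdiff.1 hy).2)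
        exact_mod_cast card_le_card (filter_subset_filter _ (filter_subset _ _))
    _ ≤ #(X + X) * c := by
        rw [sum_const, nsmul_eq_mul]
        gcongr
        exact sdiff_subset

lemma card_sdiff_mul_le_card_filter_add_notMem (X P R : Finset α) {c : ℝ}
    (hR : ∀ x ∈ X \ R, c ≤ #{x' ∈ X | x' + x ∉ P}) :
    #(X \ R) * c ≤ #{p ∈ X ×ˢ X | p.1 + p.2 ∉ P} := by
  calc #(X \ R) * c = ∑ _x ∈ X \ R, c := by rw [sum_const, nsmul_eq_mul]
    _ ≤ ∑ x ∈ X \ R, (#{x' ∈ X | x' + x ∉ P} : ℝ) := sum_le_sum hR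
    _ ≤ ∑ x ∈ X, (#{x' ∈ X | x' + x ∉ P} : ℝ) :=
        sum_le_sum_of_subset_of_nonneg sdiff_subset fun _ _ _ ↦ Nat.cast_nonneg _
    _ = #{p ∈ X ×ˢ X | p.1 + p.2 ∉ P} := by
        simp only [card_filter, Nat.cast_sum, sum_product_right]

lemma card_filter_add_right_notMem [IsRightCancelAdd α] (X P : Finset α) (x : α) :
    (#{x' ∈ X | x' + x ∉ P} : ℝ) = #X - #(X.image (· + x) ∩ P) := by
  rw [← filter_mem_eq_inter, filter_image, card_image_of_injective _ (add_left_injective x),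
    ← card_filter_add_card_filter_not (s := X) (fun x' ↦ x' + x ∈ P)]
  push_cast
  ring

end

theorem stmt13_general (X : Finset ℝ) (L : ℝ) (hL : 1 ≤ L)
    (P R : Finset ℝ)
    (hP : P = (X + X).filter
      (fun y => (((X ×ˢ X).filter (fun p => p.1 + p.2 = y)).card : ℝ) ≥
        (X.card : ℝ) ^ 2 / (8 * ((X + X).card : ℝ) * L)))
    (hR : R = X.filter
      (fun x => (((X.image (fun x' => x' + x)) ∩ P).card : ℝ) ≥ (3 / 4) * (X.card : ℝ))) :
    (R.card : ℝ) ≥ (1 - 1 / (2 * L)) * (X.card : ℝ) := by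
  rcases X.eq_empty_or_nonempty with rfl | hX
  · simp [hR]
  have hn : (0 : ℝ) < #X := by exact_mod_cast hX.card_pos
  have hXX : (0 : ℝ) < #(X + X) := by exact_mod_cast (hX.add hX).card_pos
  have hL₀ : 0 < L := by linarith
  have upper := card_filter_add_notMem_le X P (c := #X ^ 2 / (8 * #(X + X) * L))
    (by positivity) fun y hy hyP ↦ by
      simp only [hP, mem_filter, hy, true_and, not_le] at hyP
      exact hyP.le
  have lower := card_sdiff_mul_le_card_filter_add_notMem X P R (c := #X / 4) fun x hx ↦ by
    obtain ⟨hxX, hxR⟩ := mem_sdiff.1 hx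
    simp only [hR, mem_filter, hxX, true_and, not_le] at hxR
    rw [card_filter_add_right_notMem]
    linarith
  have hm : (#(X \ R) : ℝ) ≤ #X / (2 * L) := by
    have hbound : (#(X + X) : ℝ) * (#X ^ 2 / (8 * #(X + X) * L)) = #X ^ 2 / (8 * L) := by
      field_simp
    have key := lower.trans (upper.trans_eq hbound)
    rw [le_div_iff₀ (by positivity)]
    rw [le_div_iff₀ (by positivity)] at key
    nlinarith
  have hsplit : (#(X \ R) : ℝ) + #R = #X := by
    exact_mod_cast card_sdiff_add_card_eq_card (hR ▸ filter_subset _ X)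
  have : (1 - 1 / (2 * L)) * #X = #X - #X / (2 * L) := by ring
  linarith

theorem stmt13 (X : Finset ℝ) (hX : 2 ≤ X.card) (L : ℝ) (hL : 1 ≤ L)
    (P R : Finset ℝ)
    (hP : P = (X + X).filter
      (fun y => (((X ×ˢ X).filter (fun p => p.1 + p.2 = y)).card : ℝ) ≥
        (X.card : ℝ) ^ 2 / (8 * ((X + X).card : ℝ) * L)))
    (hR : R = X.filter
      (fun x => (((X.image (fun x' => x' + x)) ∩ P).card : ℝ) ≥ (3 / 4) * (X.card : ℝ))) :
    (R.card : ℝ) ≥ (1 - 1 / (2 * L)) * (X.card : ℝ) :=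
  stmt13_general X L hL P R hP hR
end
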